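/- In the braid group B_5, the word σ1 σ2⁻¹ σ1 σ2 σ3 σ4 σ2⁻¹ σ4 σ3 σ2 σ3⁻¹ σ4⁻¹ σ2 σ3⁻¹ (a braid representative of the knot 12n582) equals the product of the positive bands of its band decomposition with band centers {1, 3, 6, 10}; in particular, this braid is quasipositive. -/

import Mathlib

/-- The Artin relations for the braid group with `m` generators
`σ_1, …, σ_m` (indexed by `Fin m`), i.e. the braid group `B_{m+1}`:
`σ_i σ_j = σ_j σ_i` for `|i - j| ≥ 2`, and
`σ_i σ_{i+1} σ_i = σ_{i+1} σ_i σ_{i+1}`. -/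
def braidRels (m : ℕ) : Set (FreeGroup (Fin m)) :=
  { r | (∃ i j : Fin m, (i : ℕ) + 2 ≤ (j : ℕ) ∧
          r = FreeGroup.of i * FreeGroup.of j * (FreeGroup.of i)⁻¹ * (FreeGroup.of j)⁻¹) ∨
        (∃ i j : Fin m, (i : ℕ) + 1 = (j : ℕ) ∧
          r = FreeGroup.of i * FreeGroup.of j * FreeGroup.of i *
              (FreeGroup.of j)⁻¹ * (FreeGroup.of i)⁻¹ * (FreeGroup.of j)⁻¹) }

/-- The braid group `B_{m+1}`, presented with `m` Artin generators.
Here index `i : Fin m` corresponds to the Artin generator `σ_{i+1}`. -/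
abbrev BraidGrp (m : ℕ) := PresentedGroup (braidRels m)

/-- The Artin generator `σ_{i+1}` of the braid group `B_{m+1}`. -/
def σ {m : ℕ} (i : Fin m) : BraidGrp m := PresentedGroup.of i

/-- A letter of a braid word: a generator index together with a sign
(`true` = the positive generator, `false` = its inverse). -/
abbrev Letter (m : ℕ) := Fin m × Bool

/-- The group element represented by a letter. -/
def letterEl {m : ℕ} (x : Letter m) : BraidGrp m :=
  if x.2 then σ x.1 else (σ x.1)⁻¹

/-- The group element represented by a braid word. -/
def wordProd {m : ℕ} (w : List (Letter m)) : BraidGrp m :=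
  (w.map letterEl).prod

/-- The band of the band decomposition of the word `w` with band centers `S`
(1-based positions) at center `p`: namely `α_p * x_p * α_p⁻¹`, where `x_p` is
the letter of `w` at position `p` and `α_p` is the product, in increasing
order of position, of the letters of `w` at positions `q < p` with `q ∉ S`. -/
def band {m : ℕ} (w : List (Letter m)) (S : List ℕ) (p : ℕ) : BraidGrp m :=
  let α : BraidGrp m :=
    wordProd (((w.zipIdx.map Prod.swap).filter fun qx => decide (qx.1 + 1 < p ∧ qx.1 + 1 ∉ S)).map Prod.snd)
  match w[p - 1]? with
  | some x => α * letterEl x * α⁻¹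
  | none => 1

/-- The product, in increasing order of band center, of the bands of the
band decomposition of the word `w` with band centers `S`. -/
def bandProd {m : ℕ} (w : List (Letter m)) (S : List ℕ) : BraidGrp m :=
  (S.map (band w S)).prod

/-- A positive band in the braid group: a conjugate `α σ_j α⁻¹` of a generator. -/
def IsPositiveBand {m : ℕ} (x : BraidGrp m) : Prop :=
  ∃ (α : BraidGrp m) (j : Fin m), x = α * σ j * α⁻¹

/-- A braid is quasipositive if it is a product of positive bands. -/
def IsQuasipositive {m : ℕ} (x : BraidGrp m) : Prop :=
  ∃ l : List (BraidGrp m), (∀ b ∈ l, IsPositiveBand b) ∧ x = l.prod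

/-- A negative band in the braid group: a conjugate `α σ_j⁻¹ α⁻¹` of the
inverse of a generator. -/
def IsNegativeBand {m : ℕ} (x : BraidGrp m) : Prop :=
  ∃ (α : BraidGrp m) (j : Fin m), x = α * (σ j)⁻¹ * α⁻¹

/-- A braid is quasinegative if it is a product of negative bands. -/
def IsQuasinegative {m : ℕ} (x : BraidGrp m) : Prop :=
  ∃ l : List (BraidGrp m), (∀ b ∈ l, IsNegativeBand b) ∧ x = l.prod

/-- The braid word for the knot `12n582` (letter `(i, true)` is `σ_(i+1)`,
`(i, false)` is `σ_(i+1)⁻¹`). -/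
def theWord : List (Letter 4) :=
  [(0, true), (1, false), (0, true), (1, true), (2, true), (3, true), (1, false), (3, true), (2, true), (1, true), (2, false), (3, false), (1, true), (2, false)]

/-- The band centers. -/
def theCenters : List ℕ := [1, 3, 6, 10]

/-!
In a product of bands `α_p x_p α_p⁻¹` taken over increasing centers, each `α_p⁻¹ α_{p'}` collapses to
the letters strictly between `p` and `p'`, so the product telescopes:
`bandProd w S * (the letters of w off the centers) = w`. For the word of `12n582` the letters off the
centers, `σ₂⁻¹ σ₂ σ₃ σ₂⁻¹ σ₄ σ₃ σ₃⁻¹ σ₄⁻¹ σ₂ σ₃⁻¹`, cancel already in the free group, so the word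
equals its band product; each band is positive because every center carries a positive letter.
-/

section SelectLetters

variable {α : Type*}

-- `P` is tested on 0-based indices, whereas `band` counts positions from 1.
def selectLetters (w : List α) (P : ℕ → Prop) [DecidablePred P] : List α :=
  ((w.zipIdx.map Prod.swap).filter fun qx => decide (P qx.1)).map Prod.snd

theorem selectLetters_nil (P : ℕ → Prop) [DecidablePred P] :
    selectLetters ([] : List α) P = [] := rfl

theorem selectLetters_cons (x : α) (w : List α) (P : ℕ → Prop) [DecidablePred P] :
    selectLetters (x :: w) P = (if P 0 then [x] else []) ++ selectLetters w (fun q => P (q + 1)) := by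
  unfold selectLetters
  rw [List.zipIdx_cons, List.zipIdx_succ]
  split_ifs with h <;> simp [List.filter_map, Function.comp_def, h]

end SelectLetters

theorem prod_map_conj {G : Type*} [Group G] (c : G) (l : List G) :
    (l.map fun a => c * a * c⁻¹).prod = c * l.prod * c⁻¹ := by
  induction l with
  | nil => simp
  | cons a l ih =>
    rw [List.map_cons, List.prod_cons, List.prod_cons, ih]
    group

section CenterPositions

variable {S : List ℕ}

theorem add_one_mem_map_sub_one (q : ℕ) : q + 1 ∈ S.map (· - 1) ↔ q + 2 ∈ S := by
  simp only [List.mem_map]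
  exact ⟨fun ⟨p, hp, hpq⟩ => by rwa [show q + 2 = p by omega], fun h => ⟨q + 2, h, rfl⟩⟩

theorem pairwise_map_sub_one (hS : S.Pairwise (· < ·)) (h2 : ∀ p ∈ S, 2 ≤ p) :
    (S.map (· - 1)).Pairwise (· < ·) ∧ ∀ p ∈ S.map (· - 1), 0 < p := by
  refine ⟨List.pairwise_map.2 (hS.imp_of_mem fun ha _ hab => ?_), ?_⟩
  · have := h2 _ ha
    omega
  · simp only [List.mem_map]
    rintro _ ⟨p, hp, rfl⟩
    have := h2 p hp
    omega

theorem eq_one_cons_or_forall_two_le (hS : S.Pairwise (· < ·)) (hpos : ∀ p ∈ S, 0 < p) :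
    (∃ S', S = 1 :: S' ∧ ∀ p ∈ S', 2 ≤ p) ∨ ∀ p ∈ S, 2 ≤ p := by
  rcases S with _ | ⟨s, S'⟩
  · simp
  rw [List.pairwise_cons] at hS
  have hs := hpos s List.mem_cons_self
  by_cases h1 : s = 1
  · exact Or.inl ⟨S', by rw [h1], fun p hp => by have := hS.1 p hp; omega⟩
  · refine Or.inr fun p hp => ?_
    rcases List.mem_cons.1 hp with rfl | hp
    · omega
    · have := hS.1 p hp
      omega

end CenterPositions

section BandDecomposition

variable {m : ℕ}

theorem wordProd_nil : wordProd ([] : List (Letter m)) = 1 := rfl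

theorem wordProd_cons (x : Letter m) (w : List (Letter m)) :
    wordProd (x :: w) = letterEl x * wordProd w := List.prod_cons

theorem wordProd_append (v w : List (Letter m)) :
    wordProd (v ++ w) = wordProd v * wordProd w := by
  simp [wordProd]

theorem wordProd_eq_mk (w : List (Letter m)) :
    wordProd w = PresentedGroup.mk (braidRels m) (FreeGroup.mk w) := by
  induction w with
  | nil => rfl
  | cons x w ih =>
    rw [wordProd_cons, ih, ← List.singleton_append, ← FreeGroup.mul_mk, map_mul]
    obtain ⟨i, _ | _⟩ := x
    · change (PresentedGroup.mk _ (FreeGroup.mk [(i, true)]))⁻¹ * _ = _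
      rw [← map_inv, FreeGroup.inv_mk]
      rfl
    · rfl

theorem wordProd_eq_one_of_reduce_eq_nil {w : List (Letter m)} (h : FreeGroup.reduce w = []) :
    wordProd w = 1 := by
  rw [wordProd_eq_mk, ← FreeGroup.reduce.self, h]
  rfl

def offCenters (w : List (Letter m)) (S : List ℕ) : List (Letter m) :=
  selectLetters w fun q => q + 1 ∉ S

theorem offCenters_cons {x : Letter m} {w : List (Letter m)} {S T : List ℕ}
    (hST : ∀ q, q + 2 ∈ S ↔ q + 1 ∈ T) :
    offCenters (x :: w) S = (if 1 ∉ S then [x] else []) ++ offCenters w T := by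
  simp only [offCenters, selectLetters_cons, zero_add, hST]

section Band

variable {w : List (Letter m)} {S : List ℕ} {p : ℕ}

theorem band_of_getElem?_eq_some {x : Letter m} (h : w[p - 1]? = some x) :
    band w S p = wordProd (selectLetters w fun q => q + 1 < p ∧ q + 1 ∉ S) * letterEl x *
      (wordProd (selectLetters w fun q => q + 1 < p ∧ q + 1 ∉ S))⁻¹ := by
  simp only [band, h]
  rfl

theorem band_of_getElem?_eq_none (h : w[p - 1]? = none) : band w S p = 1 := by
  simp only [band, h]

-- `T` holds the centers of `x :: w` beyond position 1, renumbered as positions of `w`.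
theorem band_cons {x : Letter m} {T : List ℕ} (hp : 2 ≤ p) (hST : ∀ q, q + 2 ∈ S ↔ q + 1 ∈ T) :
    band (x :: w) S p = wordProd (if 1 ∉ S then [x] else []) * band w T (p - 1) *
      (wordProd (if 1 ∉ S then [x] else []))⁻¹ := by
  have hsel : (selectLetters (x :: w) fun q => q + 1 < p ∧ q + 1 ∉ S) =
      (if 1 ∉ S then [x] else []) ++ selectLetters w fun q => q + 1 < p - 1 ∧ q + 1 ∉ T := by
    rw [selectLetters_cons]
    congr 1
    · simp [show 1 < p by omega]
    · congr 1
      funext q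
      rw [← hST, show q + 1 < p - 1 ↔ q + 1 + 1 < p by omega]
  obtain ⟨p, rfl⟩ : ∃ p', p = p' + 2 := ⟨p - 2, by omega⟩
  cases h : w[p]? with
  | none =>
    rw [band_of_getElem?_eq_none h, band_of_getElem?_eq_none h]
    group
  | some y =>
    rw [band_of_getElem?_eq_some (x := y) h, band_of_getElem?_eq_some (x := y) h, hsel, wordProd_append]
    group

end Band

theorem band_cons_one (x : Letter m) (w : List (Letter m)) (S : List ℕ) :
    band (x :: w) S 1 = letterEl x := by
  rw [band_of_getElem?_eq_some rfl]
  simp [selectLetters, wordProd]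

theorem prod_map_band_cons {x : Letter m} {w : List (Letter m)} {S S' : List ℕ}
    (hS' : ∀ p ∈ S', 2 ≤ p) (hST : ∀ q, q + 2 ∈ S ↔ q + 1 ∈ S'.map (· - 1)) :
    (S'.map (band (x :: w) S)).prod = wordProd (if 1 ∉ S then [x] else []) *
      bandProd w (S'.map (· - 1)) * (wordProd (if 1 ∉ S then [x] else []))⁻¹ := by
  rw [bandProd, List.map_map, ← prod_map_conj, List.map_congr_left fun p hp => band_cons (hS' p hp) hST,
    List.map_map]
  rfl

theorem bandProd_mul_wordProd_offCenters (w : List (Letter m)) {S : List ℕ}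
    (hS : S.Pairwise (· < ·)) (hpos : ∀ p ∈ S, 0 < p) :
    bandProd w S * wordProd (offCenters w S) = wordProd w := by
  induction w generalizing S with
  | nil =>
    have hbands : bandProd ([] : List (Letter m)) S = 1 :=
      List.prod_eq_one fun b hb => by
        obtain ⟨p, -, rfl⟩ := List.mem_map.1 hb
        exact band_of_getElem?_eq_none List.getElem?_nil
    simp [hbands, offCenters, selectLetters_nil, wordProd_nil]
  | cons x w ih =>
    rcases eq_one_cons_or_forall_two_le hS hpos with ⟨S', rfl, hS'⟩ | hS2
    · obtain ⟨hT, hTpos⟩ := pairwise_map_sub_one (List.pairwise_cons.1 hS).2 hS'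
      have hST : ∀ q, q + 2 ∈ 1 :: S' ↔ q + 1 ∈ S'.map (· - 1) := fun q => by
        simp only [add_one_mem_map_sub_one, List.mem_cons, Nat.reduceEqDiff, false_or]
      rw [bandProd, List.map_cons, List.prod_cons, prod_map_band_cons hS' hST, offCenters_cons hST,
        band_cons_one, wordProd_cons, ← ih hT hTpos]
      simp [wordProd_nil, mul_assoc]
    · obtain ⟨hT, hTpos⟩ := pairwise_map_sub_one hS hS2
      have hST : ∀ q, q + 2 ∈ S ↔ q + 1 ∈ S.map (· - 1) := fun q => (add_one_mem_map_sub_one q).symm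
      have h1 : 1 ∉ S := fun h => by have := hS2 1 h; omega
      rw [bandProd, prod_map_band_cons hS2 hST, offCenters_cons hST, wordProd_cons, ← ih hT hTpos]
      simp [h1, wordProd_cons, wordProd_nil, mul_assoc]

theorem isPositiveBand_band {w : List (Letter m)} {S : List ℕ} {p : ℕ} {j : Fin m}
    (h : w[p - 1]? = some (j, true)) : IsPositiveBand (band w S p) :=
  ⟨_, j, band_of_getElem?_eq_some h⟩

theorem isQuasipositive_bandProd {w : List (Letter m)} {S : List ℕ}
    (h : ∀ p ∈ S, ∃ j, w[p - 1]? = some (j, true)) : IsQuasipositive (bandProd w S) := by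
  refine ⟨S.map (band w S), fun b hb => ?_, rfl⟩
  obtain ⟨p, hp, rfl⟩ := List.mem_map.1 hb
  obtain ⟨j, hj⟩ := h p hp
  exact isPositiveBand_band hj

end BandDecomposition

/-- The braid representative of `12n582` equals the product of the bands of its
band decomposition with the given band centers; in particular it is quasipositive. -/
theorem knot_12n582_quasipositive :
    wordProd theWord = bandProd theWord theCenters ∧
      IsQuasipositive (wordProd theWord) := by
  have hfree : wordProd (offCenters theWord theCenters) = 1 :=
    wordProd_eq_one_of_reduce_eq_nil (by decide)
  have key : wordProd theWord = bandProd theWord theCenters := by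
    rw [← bandProd_mul_wordProd_offCenters theWord (S := theCenters) (by decide) (by decide), hfree,
      mul_one]
  exact ⟨key, key ▸ isQuasipositive_bandProd (by decide)⟩
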